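/- arXiv:math/0604427 — 2 statements merged into one kernel-verified Lean document; each statement's English description precedes it below -/
import Mathlib

section
/- For every odd prime p, κ_p equals the least positive integer n such that γ_p(n mod p) ≠ 0 in 𝔽_p. -/
def fermatQuotient (p : ℕ) (k : ℤ) : ℕ :=
  (((k ^ (p - 1) - 1) / p) % p).toNat

noncomputable def kappa (p : ℕ) : ℕ :=
  sInf {n : ℕ | 0 < n ∧ ¬ p ∣ n ∧ fermatQuotient p n ≠ 0}

def mirimanoff (p : ℕ) (t : ZMod p) : ZMod p :=
  ∑ j ∈ Finset.Icc 1 (p - 1), (j : ZMod p)⁻¹ * t ^ j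

/-!
Put `W(n) = powSubSelfDiv p n = (n ^ p - n) / p`; then `W(n) ≡ n q_p(n) (mod p)` whenever
`p ∤ n`. Expanding `(n - 1) ^ p` and using `C(p, k) / p ≡ (-1) ^ (k - 1) / k (mod p)` gives
`W(n) - W(n - 1) ≡ -γ_p(n)`, hence `W(n) ≡ -(γ_p(1) + ⋯ + γ_p(n))`. So `q_p` vanishes below the
least `n > 0` with `γ_p(n) ≠ 0` and not at that `n`, which is prime to `p` because `γ_p(0) = 0`.
Such an `n` exists since `γ_p` is a nonzero polynomial of degree `< p`.
-/

open Finset Polynomial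

theorem pow_sub_sub_one_pow_sub_one_of_odd {R : Type*} [CommRing R] {p : ℕ} (hp : Odd p) (x : R) :
    x ^ p - (x - 1) ^ p - 1 = ∑ k ∈ Icc 1 (p - 1), (-1) ^ k * x ^ k * (p.choose k : R) := by
  obtain ⟨q, rfl⟩ : ∃ q, p = q + 1 := ⟨p - 1, by have := hp.pos; omega⟩
  have hsign : ∀ k, (-1 : R) ^ (k + (q + 1)) = -(-1) ^ k := fun k => by
    rw [pow_add, hp.neg_one_pow, mul_neg_one]
  rw [sub_pow, sum_range_succ, sum_range_eq_add_Ico _ (by omega), ← Ico_add_one_right_eq_Icc,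
    Nat.add_sub_cancel]
  simp only [hsign, one_pow, mul_one, pow_zero, Nat.choose_self, Nat.choose_zero_right, neg_mul,
    sum_neg_distrib, Nat.cast_one, hp.neg_one_pow]
  ring

theorem mirimanoff_zero {p : ℕ} : mirimanoff p 0 = 0 :=
  sum_eq_zero fun j hj => by rw [zero_pow (by simp at hj; omega), mul_zero]

theorem fermatQuotient_eq_zero_iff {p : ℕ} [NeZero p] (k : ℤ) :
    fermatQuotient p k = 0 ↔ (fermatQuotient p k : ZMod p) = 0 := by
  have hlt : fermatQuotient p k < p := by
    have hp := NeZero.pos p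
    have := Int.emod_lt_of_pos ((k ^ (p - 1) - 1) / p) (Int.natCast_pos.2 hp)
    unfold fermatQuotient
    omega
  rw [ZMod.natCast_eq_zero_iff]
  exact ⟨fun h => h ▸ dvd_zero p, fun h => Nat.eq_zero_of_dvd_of_lt h hlt⟩

noncomputable def mirimanoffPoly (p : ℕ) : (ZMod p)[X] :=
  ∑ j ∈ Icc 1 (p - 1), C (j : ZMod p)⁻¹ * X ^ j

theorem eval_mirimanoffPoly {p : ℕ} (t : ZMod p) :
    (mirimanoffPoly p).eval t = mirimanoff p t := by
  simp [mirimanoffPoly, mirimanoff, eval_finsetSum]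

theorem natDegree_mirimanoffPoly_le (p : ℕ) : (mirimanoffPoly p).natDegree ≤ p - 1 :=
  natDegree_sum_le_of_forall_le _ _ fun _ hj =>
    (natDegree_C_mul_X_pow_le _ _).trans (mem_Icc.1 hj).2

def powSubSelfDiv (p : ℕ) (n : ℤ) : ℤ := (n ^ p - n) / p

section

variable {p : ℕ} [Fact p.Prime]

theorem natCast_choose_sub_one_eq_neg_one_pow {k : ℕ} (hk : k < p) :
    ((p - 1).choose k : ZMod p) = (-1) ^ k := by
  -- `∑_{i ≤ k} (-1)^i C(p, i) = (-1)^k C(p - 1, k)`, and mod `p` only the `i = 0` term survives.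
  have h := congrArg (Int.cast : ℤ → ZMod p)
    (Int.alternating_sum_range_choose_eq_choose (n := p - 1) (m := k))
  rw [Nat.sub_add_cancel (Fact.out : p.Prime).one_le, sum_range_succ'] at h
  push_cast at h
  rw [sum_eq_zero fun i hi => ?_, zero_add, Nat.choose_zero_right] at h
  · have hsq : ((-1 : ZMod p) ^ k) ^ 2 = 1 := by rw [← pow_mul, pow_mul', neg_one_sq, one_pow]
    linear_combination (-(-1) ^ k) * h - ((p - 1).choose k : ZMod p) * hsq
  · rw [(ZMod.natCast_eq_zero_iff _ _).2, mul_zero]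
    exact (Fact.out : p.Prime).dvd_choose_self i.succ_ne_zero (by simp at hi; omega)

theorem natCast_choose_div_self {k : ℕ} (hk0 : 0 < k) (hkp : k < p) :
    ((p.choose k / p : ℕ) : ZMod p) = (-1) ^ (k - 1) * (k : ZMod p)⁻¹ := by
  have hp : p.Prime := Fact.out
  have hmul : p.choose k / p * k = (p - 1).choose (k - 1) := by
    have h := Nat.add_one_mul_choose_eq (p - 1) (k - 1)
    rw [Nat.sub_add_cancel hp.one_le, Nat.sub_add_cancel hk0,
      ← Nat.mul_div_cancel' (hp.dvd_choose_self hk0.ne' hkp), mul_assoc] at h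
    exact (Nat.eq_of_mul_eq_mul_left hp.pos h).symm
  have hk : (k : ZMod p) ≠ 0 := by
    rw [Ne, ZMod.natCast_eq_zero_iff]
    exact Nat.not_dvd_of_pos_of_lt hk0 hkp
  rw [eq_mul_inv_iff_mul_eq₀ hk, ← Nat.cast_mul, hmul,
    natCast_choose_sub_one_eq_neg_one_pow (by omega)]

theorem mul_powSubSelfDiv (n : ℤ) : (p : ℤ) * powSubSelfDiv p n = n ^ p - n := by
  refine Int.mul_ediv_cancel' ?_
  rw [← ZMod.intCast_zmod_eq_zero_iff_dvd]
  push_cast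
  rw [ZMod.pow_card, sub_self]

theorem powSubSelfDiv_sub_powSubSelfDiv_sub_one (hodd : Odd p) (n : ℤ) :
    ((powSubSelfDiv p n - powSubSelfDiv p (n - 1) : ℤ) : ZMod p) = -mirimanoff p n := by
  have hp : p.Prime := Fact.out
  have hcancel : powSubSelfDiv p n - powSubSelfDiv p (n - 1) =
      ∑ k ∈ Icc 1 (p - 1), (-1) ^ k * n ^ k * ((p.choose k / p : ℕ) : ℤ) := by
    refine mul_left_cancel₀ (Int.natCast_ne_zero.2 hp.ne_zero) ?_
    rw [mul_sub, mul_powSubSelfDiv, mul_powSubSelfDiv, mul_sum]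
    convert pow_sub_sub_one_pow_sub_one_of_odd hodd n using 1
    · ring
    · refine sum_congr rfl fun k hk => ?_
      rw [mem_Icc] at hk
      have hdvd : p ∣ p.choose k := hp.dvd_choose_self (by omega) (by omega)
      rw [mul_left_comm, ← Nat.cast_mul, Nat.mul_div_cancel' hdvd]
  rw [hcancel, mirimanoff, ← sum_neg_distrib]
  simp only [Int.cast_sum, Int.cast_mul, Int.cast_pow, Int.cast_neg, Int.cast_one, Int.cast_natCast]
  refine sum_congr rfl fun k hk => ?_
  rw [mem_Icc] at hk
  rw [natCast_choose_div_self (by omega) (by omega)]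
  have hsign : (-1 : ZMod p) ^ k * (-1) ^ (k - 1) = -1 := by
    rw [← pow_add]
    exact Odd.neg_one_pow ⟨k - 1, by omega⟩
  linear_combination ((k : ZMod p)⁻¹ * (n : ZMod p) ^ k) * hsign

theorem powSubSelfDiv_natCast_eq_neg_sum_mirimanoff (hodd : Odd p) (n : ℕ) :
    (powSubSelfDiv p n : ZMod p) = -∑ m ∈ Icc 1 n, mirimanoff p m := by
  induction n with
  | zero => simp [powSubSelfDiv, zero_pow (Fact.out : p.Prime).ne_zero]
  | succ n ih =>
    have h := powSubSelfDiv_sub_powSubSelfDiv_sub_one hodd (n + 1)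
    rw [add_sub_cancel_right, Int.cast_sub, ih, sub_eq_iff_eq_add] at h
    rw [sum_Icc_succ_top (by omega), Nat.cast_succ, h]
    push_cast
    ring

theorem powSubSelfDiv_natCast_eq_neg_mirimanoff (hodd : Odd p) {n : ℕ} (hn : 0 < n)
    (hvanish : ∀ m, 0 < m → m < n → mirimanoff p m = 0) :
    (powSubSelfDiv p n : ZMod p) = -mirimanoff p n := by
  rw [powSubSelfDiv_natCast_eq_neg_sum_mirimanoff hodd,
    sum_eq_single_of_mem n (mem_Icc.2 ⟨hn, le_rfl⟩)]
  intro m hm hmn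
  rw [mem_Icc] at hm
  exact hvanish m (by omega) (by omega)

theorem powSubSelfDiv_eq_mul_fermatQuotient {k : ℤ} (hk : (k : ZMod p) ≠ 0) :
    (powSubSelfDiv p k : ZMod p) = k * fermatQuotient p k := by
  have hp : p.Prime := Fact.out
  set A := (k ^ (p - 1) - 1) / p
  have hA : (p : ℤ) * A = k ^ (p - 1) - 1 := by
    refine Int.mul_ediv_cancel' ?_
    rw [← ZMod.intCast_zmod_eq_zero_iff_dvd]
    push_cast
    rw [ZMod.pow_card_sub_one_eq_one hk, sub_self]
  have hW : powSubSelfDiv p k = k * A := by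
    refine mul_left_cancel₀ (Int.natCast_ne_zero.2 hp.ne_zero) ?_
    rw [mul_powSubSelfDiv, mul_left_comm, hA, mul_sub, ← pow_succ', Nat.sub_add_cancel hp.one_le,
      mul_one]
  have hq : (fermatQuotient p k : ℤ) = A % p :=
    Int.toNat_of_nonneg (Int.emod_nonneg _ (Int.natCast_ne_zero.2 hp.ne_zero))
  rw [hW, Int.cast_mul, ← Int.cast_natCast, hq, ZMod.intCast_mod]

theorem fermatQuotient_natCast_ne_zero_iff {n : ℕ} (hn : ¬ p ∣ n) :
    fermatQuotient p n ≠ 0 ↔ (powSubSelfDiv p n : ZMod p) ≠ 0 := by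
  have hn' : ((n : ℤ) : ZMod p) ≠ 0 := by
    rwa [Int.cast_natCast, Ne, ZMod.natCast_eq_zero_iff]
  rw [Ne, fermatQuotient_eq_zero_iff, powSubSelfDiv_eq_mul_fermatQuotient hn', mul_ne_zero_iff,
    and_iff_right hn']

theorem exists_mirimanoff_ne_zero : ∃ t : ZMod p, mirimanoff p t ≠ 0 := by
  have hp := (Fact.out : p.Prime).two_le
  have hcoeff : (mirimanoffPoly p).coeff 1 = 1 := by
    rw [mirimanoffPoly, finsetSum_coeff, sum_eq_single_of_mem 1 (mem_Icc.2 ⟨le_rfl, by omega⟩)]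
    · simp
    · intro j _ hj
      rw [coeff_C_mul, coeff_X_pow, if_neg (Ne.symm hj), mul_zero]
  by_contra! h
  have h0 : mirimanoffPoly p = 0 :=
    eq_zero_of_natDegree_lt_card_of_eval_eq_zero _ Function.injective_id
      (fun t => (eval_mirimanoffPoly t).trans (h t))
      (by simpa using (natDegree_mirimanoffPoly_le p).trans_lt (Nat.sub_lt (by omega) one_pos))
  simp [h0] at hcoeff

theorem exists_pos_mirimanoff_natCast_ne_zero : ∃ n : ℕ, 0 < n ∧ mirimanoff p n ≠ 0 := by
  obtain ⟨t, ht⟩ := exists_mirimanoff_ne_zero (p := p)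
  have ht0 : t ≠ 0 := by
    rintro rfl
    exact ht mirimanoff_zero
  exact ⟨t.val, ZMod.val_pos.2 ht0, by rwa [ZMod.natCast_zmod_val]⟩

end

theorem kappa_eq_least_nonzero_of_mirimanoff (p : ℕ) (hp : p.Prime) (hodd : Odd p) :
    kappa p = sInf {n : ℕ | 0 < n ∧ mirimanoff p (n : ZMod p) ≠ 0} := by
  have := Fact.mk hp
  set S := {n : ℕ | 0 < n ∧ mirimanoff p (n : ZMod p) ≠ 0}
  obtain ⟨hpos, hne⟩ := Nat.sInf_mem (s := S) exists_pos_mirimanoff_natCast_ne_zero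
  have hndvd : ¬ p ∣ sInf S := fun h =>
    hne (by rw [(ZMod.natCast_eq_zero_iff _ _).2 h, mirimanoff_zero])
  have hmem : sInf S ∈ {n : ℕ | 0 < n ∧ ¬ p ∣ n ∧ fermatQuotient p n ≠ 0} := by
    refine ⟨hpos, hndvd, ?_⟩
    rw [fermatQuotient_natCast_ne_zero_iff hndvd,
      powSubSelfDiv_natCast_eq_neg_mirimanoff hodd hpos fun m hm hlt => ?_]
    · exact neg_ne_zero.2 hne
    · by_contra h
      exact Nat.notMem_of_lt_sInf hlt ⟨hm, h⟩
  refine le_antisymm (Nat.sInf_le hmem) (le_csInf ⟨_, hmem⟩ ?_)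
  rintro m ⟨-, hpm, hq⟩
  rw [fermatQuotient_natCast_ne_zero_iff hpm, powSubSelfDiv_natCast_eq_neg_sum_mirimanoff hodd,
    neg_ne_zero] at hq
  obtain ⟨i, hi, hγ⟩ := exists_ne_zero_of_sum_ne_zero hq
  exact (Nat.sInf_le (show i ∈ S from ⟨(mem_Icc.1 hi).1, hγ⟩)).trans (mem_Icc.1 hi).2
end

section
/- Let p be a prime with p ≡ 1 (mod 3) and let α ∈ 𝔽_p satisfy α² − α + 1 = 0. Then γ_p(α) = 0 in 𝔽_p. -/
open Finset

variable {p : ℕ}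

lemma cast_choose_sub_one_eq_neg_one_pow (hp : p.Prime) {k : ℕ} (hk : k < p) :
    ((p - 1).choose k : ZMod p) = (-1) ^ k := by
  induction k with
  | zero => simp
  | succ k ih =>
    have hpascal : p.choose (k + 1) = (p - 1).choose k + (p - 1).choose (k + 1) := by
      conv_lhs => rw [← Nat.sub_add_cancel hp.one_le]
      exact Nat.choose_succ_succ _ _
    have hzero : (p.choose (k + 1) : ZMod p) = 0 :=
      (ZMod.natCast_eq_zero_iff _ _).2 (hp.dvd_choose_self k.succ_ne_zero hk)
    rw [hpascal, Nat.cast_add, ih (by omega)] at hzero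
    linear_combination hzero

lemma mul_choose_div_self (hp : p.Prime) {j : ℕ} (hj : j ≠ 0) (hjp : j < p) :
    j * (p.choose j / p) = (p - 1).choose (j - 1) := by
  have key := Nat.add_one_mul_choose_eq (p - 1) (j - 1)
  rw [Nat.sub_add_cancel hp.one_le, Nat.sub_add_cancel (Nat.one_le_iff_ne_zero.2 hj)] at key
  obtain ⟨c, hc⟩ := hp.dvd_choose_self hj hjp
  rw [hc, Nat.mul_div_cancel_left _ hp.pos]
  apply Nat.eq_of_mul_eq_mul_left hp.pos
  rw [key, hc]
  ring

lemma inv_natCast_eq_neg_one_pow_mul (hp : p.Prime) {j : ℕ} (hj : j ≠ 0) (hjp : j < p) :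
    (j : ZMod p)⁻¹ = (-1) ^ (j - 1) * ((p.choose j / p : ℕ) : ZMod p) := by
  have := Fact.mk hp
  have h : (j : ZMod p) * ((p.choose j / p : ℕ) : ZMod p) = (-1) ^ (j - 1) := by
    rw [← Nat.cast_mul, mul_choose_div_self hp hj hjp,
      cast_choose_sub_one_eq_neg_one_pow hp (by omega)]
  refine inv_eq_of_mul_eq_one_right ?_
  rw [mul_left_comm, h, ← mul_pow]
  simp

def binomialQuotientSum (p : ℕ) {R : Type*} [CommRing R] (a : R) : R :=
  ∑ j ∈ Icc 1 (p - 1), (-1) ^ (j - 1) * ((p.choose j / p : ℕ) : R) * a ^ j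

section binomialQuotientSum

variable {R : Type*} [CommRing R]

lemma natCast_mul_binomialQuotientSum (hp : p.Prime) (hodd : Odd p) (a : R) :
    (p : R) * binomialQuotientSum p a = 1 - a ^ p - (1 - a) ^ p := by
  have hterm : ∀ j ∈ Icc 1 (p - 1), (p : R) * ((-1) ^ (j - 1) * ((p.choose j / p : ℕ) : R) * a ^ j)
      = -((-a) ^ j * p.choose j) := by
    intro j hj
    obtain ⟨hj1, hjp⟩ := mem_Icc.1 hj
    have hdiv : (p : R) * ((p.choose j / p : ℕ) : R) = p.choose j := by
      rw [← Nat.cast_mul, Nat.mul_div_cancel' (hp.dvd_choose_self (by omega) (by omega))]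
    obtain ⟨i, rfl⟩ : ∃ i, j = i + 1 := ⟨j - 1, by omega⟩
    rw [← hdiv, Nat.add_sub_cancel]
    ring
  have hIcc : Icc 1 (p - 1) = Ico 1 p := by ext; simp; omega
  have hbinom := add_pow (-a) 1 p
  rw [range_eq_Ico, sum_Ico_succ_top (Nat.zero_le p),
    sum_eq_sum_Ico_succ_bot hp.pos, ← hIcc] at hbinom
  simp only [one_pow, mul_one, pow_zero, Nat.choose_zero_right, Nat.choose_self, Nat.cast_one,
    hodd.neg_pow] at hbinom
  rw [binomialQuotientSum, mul_sum, sum_congr rfl hterm, sum_neg_distrib]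
  linear_combination hbinom

lemma binomialQuotientSum_one_sub [IsDomain R] [CharZero R] (hp : p.Prime) (hodd : Odd p)
    (a : R) : binomialQuotientSum p (1 - a) = binomialQuotientSum p a := by
  refine mul_left_cancel₀ (Nat.cast_ne_zero.2 hp.ne_zero : (p : R) ≠ 0) ?_
  rw [natCast_mul_binomialQuotientSum hp hodd, natCast_mul_binomialQuotientSum hp hodd]
  ring

lemma map_binomialQuotientSum {S : Type*} [CommRing S] (f : R →+* S) (a : R) :
    f (binomialQuotientSum p a) = binomialQuotientSum p (f a) := by
  simp [binomialQuotientSum]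

end binomialQuotientSum

lemma mirimanoff_eq_binomialQuotientSum (hp : p.Prime) (t : ZMod p) :
    mirimanoff p t = binomialQuotientSum p t :=
  sum_congr rfl fun j hj => by
    rw [inv_natCast_eq_neg_one_pow_mul hp (by grind) (by grind)]

lemma mirimanoff_one_sub (hp : p.Prime) (hodd : Odd p) (t : ZMod p) :
    mirimanoff p (1 - t) = mirimanoff p t := by
  obtain ⟨a, rfl⟩ := ZMod.intCast_surjective t
  have h := congrArg (Int.castRingHom (ZMod p)) (binomialQuotientSum_one_sub hp hodd a)
  rw [map_binomialQuotientSum, map_binomialQuotientSum] at h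
  simpa [mirimanoff_eq_binomialQuotientSum hp] using h

lemma mirimanoff_eq_neg_mul_inv (hp : p.Prime) (t : ZMod p) :
    mirimanoff p t = -t * mirimanoff p t⁻¹ := by
  have := Fact.mk hp
  rw [mirimanoff, mirimanoff, mul_sum]
  refine sum_nbij' (fun j => p - j) (fun j => p - j) ?_ ?_ ?_ ?_ fun j hj => ?_
  any_goals intro j hj; simp only [mem_Icc] at hj ⊢; omega
  obtain ⟨hj1, hjp⟩ := mem_Icc.1 hj
  have hcast : ((p - j : ℕ) : ZMod p) = -j := by
    rw [Nat.cast_sub (by omega), ZMod.natCast_self, zero_sub]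
  have hpow : t * t⁻¹ ^ (p - j) = t ^ j := by
    rcases eq_or_ne t 0 with rfl | ht
    · simp [zero_pow (by omega : j ≠ 0)]
    · nth_rewrite 1 [← ZMod.pow_card t]
      rw [inv_pow, ← pow_sub₀ t ht (Nat.sub_le p j), Nat.sub_sub_self (by omega)]
  rw [hcast, inv_neg, ← hpow]
  ring

theorem mirimanoff_sixth_root (p : ℕ) (hp : p.Prime) (h3 : p % 3 = 1)
    (α : ZMod p) (hα : α ^ 2 - α + 1 = 0) :
    mirimanoff p α = 0 := by
  have := Fact.mk hp
  have hodd : Odd p := hp.odd_of_ne_two (by omega)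
  have hinv : α⁻¹ = 1 - α := inv_eq_of_mul_eq_one_right (by linear_combination -hα)
  have hfixed : (1 + α) * mirimanoff p α = 0 := by
    have h := mirimanoff_eq_neg_mul_inv hp α
    rw [hinv, mirimanoff_one_sub hp hodd] at h
    linear_combination h
  have hthree : (3 : ZMod p) ≠ 0 := by
    intro h
    have hdvd : p ∣ 3 := (ZMod.natCast_eq_zero_iff 3 p).1 (by exact_mod_cast h)
    have := Nat.le_of_dvd (by norm_num) hdvd
    have := hp.two_le
    omega
  refine (mul_eq_zero.1 hfixed).resolve_left fun h => hthree ?_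
  linear_combination hα - (α - 2) * h
end
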